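/- For d ≥ 1, the thickness Θ_δ = min_i hᵢ / max edge of the distorted Freudenthal simplex σ_δ, given explicitly by Θ_δ = 1/(δ√(2d)) for 1/√2 ≤ δ ≤ 1, Θ_δ = √(2-2δ²)/√d for 1/√(d+1) ≤ δ ≤ 1/√2, and Θ_δ = 2δ√(1-δ²)/√(δ²d-δ²+1) for 0 < δ ≤ 1/√(d+1), attains its maximum over δ ∈ (0,1] at δ = 1/√(d+1), where it equals √(2 - 2/(d+1))/√d = √(2d/(d+1))/√d = √(2/(d+1)). -/
import Mathlib


/-- The thickness `Θ_δ` of the distorted Freudenthal simplex, given piecewise by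
`1/(δ√(2d))` for `1/√2 ≤ δ ≤ 1`, `√(2-2δ²)/√d` for `1/√(d+1) ≤ δ ≤ 1/√2`, and
`2δ√(1-δ²)/√(δ²d-δ²+1)` for `0 < δ ≤ 1/√(d+1)`. -/
noncomputable def thickFT (d : ℕ) (δ : ℝ) : ℝ :=
  if 1 / Real.sqrt 2 ≤ δ then 1 / (δ * Real.sqrt (2 * d))
  else if 1 / Real.sqrt (d + 1) ≤ δ then Real.sqrt (2 - 2 * δ ^ 2) / Real.sqrt d
  else 2 * δ * Real.sqrt (1 - δ ^ 2) / Real.sqrt (δ ^ 2 * d - δ ^ 2 + 1)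

lemma thickFT_val (d : ℕ) (hd : 1 ≤ d) :
    thickFT d (1 / Real.sqrt (d + 1)) = Real.sqrt (2 / ((d : ℝ) + 1)) := by
  have hd1 : (1:ℝ) ≤ d := by exact_mod_cast hd
  have hdp : (0:ℝ) < d := by linarith
  have hd1p : (0:ℝ) < (d:ℝ) + 1 := by linarith
  have hsq : (0:ℝ) < Real.sqrt ((d:ℝ)+1) := Real.sqrt_pos.mpr hd1p
  have hs : (1 / Real.sqrt ((d:ℝ)+1)) ^ 2 = 1 / ((d:ℝ)+1) := by
    rw [div_pow, one_pow, Real.sq_sqrt hd1p.le]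
  unfold thickFT
  by_cases h1 : 1 / Real.sqrt 2 ≤ 1 / Real.sqrt ((d:ℝ) + 1)
  · have h2 : (0:ℝ) < Real.sqrt 2 := Real.sqrt_pos.mpr (by norm_num)
    have h3 : Real.sqrt ((d:ℝ)+1) ≤ Real.sqrt 2 := by
      rwa [div_le_div_iff₀ h2 hsq, one_mul, one_mul] at h1
    have hle : (d:ℝ) + 1 ≤ 2 := by
      nlinarith [mul_self_le_mul_self (Real.sqrt_nonneg ((d:ℝ)+1)) h3,
        Real.sq_sqrt hd1p.le, Real.sq_sqrt (show (0:ℝ) ≤ 2 by norm_num)]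
    have hdeq : d = 1 := by
      have : (d:ℝ) = 1 := by linarith
      exact_mod_cast this
    subst hdeq
    rw [if_pos h1]
    push_cast
    norm_num
  · rw [if_neg h1]
    rw [if_pos (le_refl (1 / Real.sqrt ((d:ℝ)+1)))]
    have key : 2 - 2 * (1 / Real.sqrt ((d:ℝ)+1)) ^ 2 = 2 / ((d:ℝ)+1) * d := by
      rw [hs]; field_simp; ring
    rw [key, Real.sqrt_mul (by positivity),
      mul_div_assoc, div_self (by positivity : Real.sqrt (d:ℝ) ≠ 0), mul_one]

/-- the thickness `Θ_δ` attains its maximum over `δ ∈ (0,1]` at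
`δ = 1/√(d+1)`, where it equals `√(2/(d+1))`. -/
theorem stmt_15 (d : ℕ) (hd : 1 ≤ d) :
    thickFT d (1 / Real.sqrt (d + 1)) = Real.sqrt (2 / ((d : ℝ) + 1)) ∧
      ∀ δ ∈ Set.Ioc (0 : ℝ) 1, thickFT d δ ≤ thickFT d (1 / Real.sqrt (d + 1)) := by
  have hd1 : (1:ℝ) ≤ d := by exact_mod_cast hd
  have hdp : (0:ℝ) < d := by linarith
  have hd1p : (0:ℝ) < (d:ℝ) + 1 := by linarith
  have hsq : (0:ℝ) < Real.sqrt ((d:ℝ)+1) := Real.sqrt_pos.mpr hd1p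
  have hs : (1 / Real.sqrt ((d:ℝ)+1)) ^ 2 = 1 / ((d:ℝ)+1) := by
    rw [div_pow, one_pow, Real.sq_sqrt hd1p.le]
  have hval := thickFT_val d hd
  refine ⟨hval, ?_⟩
  rintro δ ⟨hδ0, hδ1⟩
  rw [hval]
  have hRnn : (0:ℝ) ≤ 2 / ((d:ℝ)+1) := by positivity
  unfold thickFT
  split_ifs with h1 h2
  · -- δ ≥ 1/√2 : 1/(δ√(2d)) ≤ 1/√d ≤ √(2/(d+1))
    have h2p : (0:ℝ) < Real.sqrt 2 := Real.sqrt_pos.mpr (by norm_num)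
    have hδp : (0:ℝ) < δ := hδ0
    have h2d : (0:ℝ) < Real.sqrt (2 * d) := Real.sqrt_pos.mpr (by positivity)
    have step1 : 1 / (δ * Real.sqrt (2 * d)) ≤ Real.sqrt 2 / Real.sqrt (2 * d) := by
      rw [div_le_div_iff₀ (by positivity) h2d, one_mul]
      have h4 : 1 ≤ Real.sqrt 2 * δ := by
        have := mul_le_mul_of_nonneg_left h1 h2p.le
        rwa [mul_one_div, div_self h2p.ne'] at this
      nlinarith [h2d]
    have step2 : Real.sqrt 2 / Real.sqrt (2 * d) = Real.sqrt (1 / d) := by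
      rw [← Real.sqrt_div (by norm_num : (0:ℝ) ≤ 2)]
      congr 1
      field_simp
    have step3 : Real.sqrt (1 / (d:ℝ)) ≤ Real.sqrt (2 / ((d:ℝ)+1)) := by
      apply Real.sqrt_le_sqrt
      rw [div_le_div_iff₀ hdp hd1p]
      linarith
    calc 1 / (δ * Real.sqrt (2 * d)) ≤ Real.sqrt 2 / Real.sqrt (2 * d) := step1
    _ = Real.sqrt (1 / d) := step2
    _ ≤ _ := step3
  · -- middle branch
    have hδs : (1 / Real.sqrt ((d:ℝ)+1)) ≤ δ := h2
    have hsq2 : (1 / ((d:ℝ)+1)) ≤ δ ^ 2 := by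
      rw [← hs]
      exact pow_le_pow_left₀ (by positivity) hδs 2
    have hnum : Real.sqrt (2 - 2 * δ ^ 2) ≤ Real.sqrt (2 / ((d:ℝ)+1) * d) := by
      apply Real.sqrt_le_sqrt
      rw [div_mul_eq_mul_div, le_div_iff₀ hd1p]
      have key : 1 ≤ δ ^ 2 * ((d:ℝ)+1) := (div_le_iff₀ hd1p).mp hsq2
      nlinarith [key]
    calc Real.sqrt (2 - 2 * δ ^ 2) / Real.sqrt d
        ≤ Real.sqrt (2 / ((d:ℝ)+1) * d) / Real.sqrt d := by
          gcongr
    _ = Real.sqrt (2 / ((d:ℝ)+1)) := by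
          rw [Real.sqrt_mul hRnn, mul_div_assoc,
            div_self (by positivity : Real.sqrt (d:ℝ) ≠ 0), mul_one]
  · -- third branch : δ < 1/√(d+1)
    have hδs : δ ≤ 1 / Real.sqrt ((d:ℝ)+1) := (not_le.mp h2).le
    have ht : δ ^ 2 ≤ 1 / ((d:ℝ)+1) := by
      rw [← hs]; exact pow_le_pow_left₀ hδ0.le hδs 2
    have htpos : 0 < δ ^ 2 := by positivity
    have hone : δ ^ 2 ≤ 1 / 2 := by
      have : (1:ℝ) / ((d:ℝ)+1) ≤ 1/2 := by
        rw [div_le_div_iff₀ hd1p (by norm_num)]; linarith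
      linarith
    have hD : (0:ℝ) < δ ^ 2 * d - δ ^ 2 + 1 := by nlinarith
    have h1δ : (0:ℝ) ≤ 1 - δ ^ 2 := by nlinarith
    have lhs_eq : 2 * δ * Real.sqrt (1 - δ ^ 2) = Real.sqrt (4 * δ ^ 2 * (1 - δ ^ 2)) := by
      rw [Real.sqrt_mul (by positivity), show 4 * δ^2 = (2*δ)^2 by ring,
        Real.sqrt_sq (by positivity)]
    rw [lhs_eq, div_le_iff₀ (Real.sqrt_pos.mpr hD),
      ← Real.sqrt_mul hRnn]
    apply Real.sqrt_le_sqrt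
    rw [div_mul_eq_mul_div, le_div_iff₀ hd1p]
    have hkey : 0 ≤ (1 - δ ^ 2 * ((d:ℝ)+1)) * (1/2 - δ ^ 2) := by
      apply mul_nonneg
      · have h5 : δ ^ 2 * ((d:ℝ)+1) ≤ 1 := (le_div_iff₀ hd1p).mp ht
        linarith
      · linarith
    nlinarith [hkey]
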